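/- Let C and D be cocomplete monoidal categories whose tensor products preserve colimits in each variable separately, and let G : C → D be a strong monoidal functor that preserves colimits. Then for any finite list of morphisms f₁, …, fₙ in C, the image G(f₁ ⊠ ⋯ ⊠ fₙ) of the iterated pushout-product is naturally isomorphic in the arrow category of D to the iterated pushout-product G(f₁) ⊠ ⋯ ⊠ G(fₙ). -/

import Mathlib

open CategoryTheory MonoidalCategory Limits

/-- The pushout-product `f₁ ⊠ f₂` of two morphisms in a monoidal category with pushouts:
the induced map `(A₁ ⊗ B₂) ⨿_{A₁ ⊗ A₂} (B₁ ⊗ A₂) ⟶ B₁ ⊗ B₂`. -/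
noncomputable def pushoutProduct {C : Type*} [Category C] [MonoidalCategory C]
    [HasPushouts C] {A₁ B₁ A₂ B₂ : C} (f₁ : A₁ ⟶ B₁) (f₂ : A₂ ⟶ B₂) :
    pushout (A₁ ◁ f₂) (f₁ ▷ A₂) ⟶ B₁ ⊗ B₂ :=
  pushout.desc (f₁ ▷ B₂) (B₁ ◁ f₂) (whisker_exchange f₁ f₂)

/-- The iterated pushout-product `f 0 ⊠ (f 1 ⊠ (⋯ ⊠ f n))` of a finite (nonempty) list
of morphisms, as an object of the arrow category. -/
noncomputable def iteratedPushoutProduct {C : Type*} [Category C] [MonoidalCategory C]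
    [HasPushouts C] : ∀ {n : ℕ} (A B : Fin (n + 1) → C), (∀ i, A i ⟶ B i) → Arrow C
  | 0, _, _, f => Arrow.mk (f 0)
  | _ + 1, A, B, f =>
      Arrow.mk (pushoutProduct (f 0)
        (iteratedPushoutProduct (fun i => A i.succ) (fun i => B i.succ) fun i => f i.succ).hom)

/-!
A strong monoidal functor `G` that preserves pushouts carries the pushout
`(A₁ ⊗ B₂) ⨿_{A₁ ⊗ A₂} (B₁ ⊗ A₂)` to the corresponding pushout of the `G`-images, and the
tensorators `μ` identify the legs, so `G (f₁ ⊠ f₂) ≅ G f₁ ⊠ G f₂` in the arrow category.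
Since `f ⊠ -` respects isomorphisms of arrows, induction on the length of the list finishes.
-/

noncomputable def pushoutProductCongrRight {C : Type*} [Category C] [MonoidalCategory C]
    [HasPushouts C] {A₁ B₁ : C} (f₁ : A₁ ⟶ B₁) {g g' : Arrow C} (e : g ≅ g') :
    Arrow.mk (pushoutProduct f₁ g.hom) ≅ Arrow.mk (pushoutProduct f₁ g'.hom) := by
  refine Arrow.isoMk
    (asIso (pushout.map (A₁ ◁ g.hom) (f₁ ▷ g.left) (A₁ ◁ g'.hom) (f₁ ▷ g'.left)
      (A₁ ◁ e.hom.right) (B₁ ◁ e.hom.left) (A₁ ◁ e.hom.left) ?_ ?_))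
    (whiskerLeftIso B₁ (Arrow.rightFunc.mapIso e)) ?_
  · rw [← MonoidalCategory.whiskerLeft_comp, ← MonoidalCategory.whiskerLeft_comp, Arrow.w]
  · exact (whisker_exchange f₁ e.hom.left).symm
  · dsimp [pushoutProduct]
    ext
    · rw [pushout.inl_desc_assoc, pushout.inl_desc_assoc, Category.assoc, pushout.inl_desc]
      exact whisker_exchange f₁ e.hom.right
    · rw [pushout.inr_desc_assoc, pushout.inr_desc_assoc, Category.assoc, pushout.inr_desc,
        ← MonoidalCategory.whiskerLeft_comp]
      exact (congrArg (B₁ ◁ ·) (Arrow.w e.hom)).trans (MonoidalCategory.whiskerLeft_comp B₁ _ _)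

section

variable {C D : Type*} [Category C] [Category D] [MonoidalCategory C] [MonoidalCategory D]
  [HasPushouts C] [HasPushouts D] (G : C ⥤ D) [G.Monoidal] [PreservesColimitsOfShape WalkingSpan G]

noncomputable def pushoutProductMapIso {A₁ B₁ A₂ B₂ : C} (f₁ : A₁ ⟶ B₁) (f₂ : A₂ ⟶ B₂) :
    Arrow.mk (pushoutProduct (G.map f₁) (G.map f₂)) ≅
      Arrow.mk (G.map (pushoutProduct f₁ f₂)) := by
  refine Arrow.isoMk
    ((asIso (pushout.map (G.obj A₁ ◁ G.map f₂) (G.map f₁ ▷ G.obj A₂)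
        (G.map (A₁ ◁ f₂)) (G.map (f₁ ▷ A₂))
        (Functor.LaxMonoidal.μ G A₁ B₂) (Functor.LaxMonoidal.μ G B₁ A₂)
        (Functor.LaxMonoidal.μ G A₁ A₂)
        (Functor.LaxMonoidal.μ_natural_right G A₁ f₂)
        (Functor.LaxMonoidal.μ_natural_left G f₁ A₂))) ≪≫
      PreservesPushout.iso G (A₁ ◁ f₂) (f₁ ▷ A₂))
    (Functor.Monoidal.μIso G B₁ B₂) ?_
  dsimp [pushoutProduct]
  apply pushout.hom_ext
  · rw [pushout.inl_desc_assoc, Category.assoc, pushout.inl_desc_assoc,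
      pushoutComparison_map_desc, Category.assoc, pushout.inl_desc,
      Functor.Monoidal.μIso_hom, Functor.LaxMonoidal.μ_natural_left]
  · rw [pushout.inr_desc_assoc, Category.assoc, pushout.inr_desc_assoc,
      pushoutComparison_map_desc, Category.assoc, pushout.inr_desc,
      Functor.Monoidal.μIso_hom, Functor.LaxMonoidal.μ_natural_right]

noncomputable def mapIteratedPushoutProductIso : ∀ {n : ℕ} (A B : Fin (n + 1) → C)
    (f : ∀ i, A i ⟶ B i), G.mapArrow.obj (iteratedPushoutProduct A B f) ≅
      iteratedPushoutProduct (fun i => G.obj (A i)) (fun i => G.obj (B i)) fun i => G.map (f i)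
  | 0, _, _, _ => Iso.refl _
  | _ + 1, A, B, f =>
      (pushoutProductMapIso G (f 0) _).symm ≪≫ pushoutProductCongrRight (G.map (f 0))
        (mapIteratedPushoutProductIso (fun i => A i.succ) (fun i => B i.succ) fun i => f i.succ)

end

theorem iteratedPushoutProduct_preserved_by_monoidal_left_adjoint_general
    {C : Type*} {D : Type*} [Category C] [Category D]
    [MonoidalCategory C] [MonoidalCategory D] [HasColimits C] [HasColimits D]
    (G : C ⥤ D) [G.Monoidal] [PreservesColimits G]
    {n : ℕ} (A B : Fin (n + 1) → C) (f : ∀ i, A i ⟶ B i) :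
    Nonempty (G.mapArrow.obj (iteratedPushoutProduct A B f)
      ≅ iteratedPushoutProduct (fun i => G.obj (A i)) (fun i => G.obj (B i))
          fun i => G.map (f i)) :=
  ⟨mapIteratedPushoutProductIso G A B f⟩

theorem iteratedPushoutProduct_preserved_by_monoidal_left_adjoint
    {C : Type*} {D : Type*} [Category C] [Category D]
    [MonoidalCategory C] [MonoidalCategory D] [HasColimits C] [HasColimits D]
    (hC : ∀ X : C, PreservesColimits (tensorLeft X) ∧ PreservesColimits (tensorRight X))
    (hD : ∀ X : D, PreservesColimits (tensorLeft X) ∧ PreservesColimits (tensorRight X))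
    (G : C ⥤ D) [G.Monoidal] [PreservesColimits G]
    {n : ℕ} (A B : Fin (n + 1) → C) (f : ∀ i, A i ⟶ B i) :
    Nonempty (G.mapArrow.obj (iteratedPushoutProduct A B f)
      ≅ iteratedPushoutProduct (fun i => G.obj (A i)) (fun i => G.obj (B i))
          fun i => G.map (f i)) :=
  iteratedPushoutProduct_preserved_by_monoidal_left_adjoint_general G A B f
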